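/- arXiv:0902.3776 — 9 statements merged into one kernel-verified Lean document; each statement's English description precedes it below -/
import Mathlib

section
/- Assume the K32 condition holds for a presentation P. If W = W′W″ is a subword of a defining word with W′ and W″ both nonempty, and W″ is a prefix of some defining word, then the piece-length of W″ equals 1. Symmetrically, if W′ is a suffix of some defining word then lp(W′) = 1. -/
/-- `P` is a piece for the presentation with defining words `R`: it occurs as a
subword of defining words in two essentially different ways. -/
def IsPiece {X : Type*} (R : Set (List X)) (P : List X) : Prop :=
  ∃ W₁ ∈ R, ∃ W₂ ∈ R, ∃ U₁ U₂ V₁ V₂ : List X,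
    W₁ = U₁ ++ P ++ U₂ ∧ W₂ = V₁ ++ P ++ V₂ ∧ (U₁ ≠ V₁ ∨ U₂ ≠ V₂)

/-- The piece-length `lp W`: the minimal number `k` such that `W` decomposes as a
concatenation of `k` pieces; `0` for the empty word, `⊤` if no decomposition exists. -/
noncomputable def pieceLength {X : Type*} (R : Set (List X)) (W : List X) : ℕ∞ :=
  sInf {n : ℕ∞ | ∃ l : List (List X),
    (∀ P ∈ l, IsPiece R P) ∧ l.flatten = W ∧ (l.length : ℕ∞) = n}

/-- The set of defining words of a presentation given by a set of relations. -/
def defWords {X : Type*} (Rel : Set (List X × List X)) : Set (List X) :=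
  {W | ∃ p ∈ Rel, W = p.1 ∨ W = p.2}

/-- The `K₃²` condition: (a) the two sides of each relation start with different
generators and end with different generators; (b) every defining word has
piece-length at least 3; (c) the words of any two distinct defining relations are
pairwise distinct (and the two sides of each relation are distinct). -/
def K32 {X : Type*} (Rel : Set (List X × List X)) : Prop :=
  (∀ p ∈ Rel, p.1.head? ≠ p.2.head? ∧ p.1.getLast? ≠ p.2.getLast?) ∧
  (∀ W ∈ defWords Rel, 3 ≤ pieceLength (defWords Rel) W) ∧
  (∀ p ∈ Rel, p.1 ≠ p.2) ∧
  (∀ p ∈ Rel, ∀ q ∈ Rel, p ≠ q →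
    p.1 ≠ q.1 ∧ p.1 ≠ q.2 ∧ p.2 ≠ q.1 ∧ p.2 ≠ q.2)

lemma pieceLength_eq_one {X : Type*} (R : Set (List X)) (W : List X)
    (hW : W ≠ []) (hp : IsPiece R W) : pieceLength R W = 1 := by
  apply le_antisymm
  · exact sInf_le ⟨[W], by simpa using hp, by simp, by simp⟩
  · refine le_sInf ?_
    rintro n ⟨l, -, hflat, hlen⟩
    rcases l with _ | ⟨a, l⟩
    · exact absurd hflat.symm (by simpa using hW)
    · rw [← hlen]
      exact_mod_cast Nat.one_le_iff_ne_zero.2 (by simp)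

/-- If `K₃²` holds, `W = W' ++ W''` is a subword of a defining word with `W'` and
`W''` nonempty, and `W''` is a prefix of some defining word, then `lp W'' = 1`;
symmetrically, if `W'` is a suffix of some defining word then `lp W' = 1`. -/
theorem sharedPieceLP1 {X : Type*} (Rel : Set (List X × List X)) (hK : K32 Rel)
    (W' W'' : List X) (hW' : W' ≠ []) (hW'' : W'' ≠ [])
    (hsub : ∃ D ∈ defWords Rel, (W' ++ W'') <:+: D) :
    ((∃ D ∈ defWords Rel, W'' <+: D) → pieceLength (defWords Rel) W'' = 1) ∧
    ((∃ D ∈ defWords Rel, W' <:+ D) → pieceLength (defWords Rel) W' = 1) := by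
  obtain ⟨D, hD, U₁, U₂, hDeq⟩ := hsub
  constructor
  · rintro ⟨E, hE, V, hV⟩
    refine pieceLength_eq_one _ _ hW'' ⟨D, hD, E, hE, U₁ ++ W', U₂, [], V, by simp [← hDeq], by simp [← hV], Or.inl ?_⟩
    simp [hW']
  · rintro ⟨E, hE, V, hV⟩
    refine pieceLength_eq_one _ _ hW' ⟨D, hD, E, hE, U₁, W'' ++ U₂, V, [], by simp [← hDeq], by simp [← hV], Or.inr ?_⟩
    simp [hW'']
end

section
/- In the semigroup S = ⟨a,b,c | abcc = cba⟩, for every natural number n the equality (abc)^n c = c(ba)^n holds in S. -/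
/-- The standard padding map `δ_X` on pairs of words. -/
def pad {X : Type*} : List X → List X → List (Option X × Option X)
  | [], [] => []
  | [], y :: ys => (none, some y) :: pad [] ys
  | x :: xs, [] => (some x, none) :: pad xs []
  | x :: xs, y :: ys => (some x, some y) :: pad xs ys
  termination_by a b => a.length + b.length

/-- The relators of the co-presented group of the semigroup presentation `Rel`. -/
def relators {X : Type*} (Rel : Set (List X × List X)) : Set (FreeGroup X) :=
  {g | ∃ p ∈ Rel, g = (p.1.map FreeGroup.of).prod * ((p.2.map FreeGroup.of).prod)⁻¹}

/-- Evaluation of a positive word in the co-presented group. -/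
def toG {X : Type*} (Rel : Set (List X × List X)) (w : List X) :
    PresentedGroup (relators Rel) :=
  (w.map PresentedGroup.of).prod

/-- Equality in the semigroup presented by `Rel`: the congruence on the free monoid
generated by the defining relations. -/
def SGRel {X : Type*} (Rel : Set (List X × List X)) (w u : List X) : Prop :=
  conGen (fun a b : FreeMonoid X => ∃ p ∈ Rel,
      a = FreeMonoid.ofList p.1 ∧ b = FreeMonoid.ofList p.2)
    (FreeMonoid.ofList w) (FreeMonoid.ofList u)

/-- The word metric on the co-presented group with respect to `X ∪ X⁻¹`;
its restriction to (the image of) the semigroup is the induced metric. -/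
noncomputable def gdist {X : Type*} (Rel : Set (List X × List X))
    (g h : PresentedGroup (relators Rel)) : ℕ∞ :=
  sInf {n : ℕ∞ | ∃ l : List (X × Bool),
    (l.map (fun b => if b.2 then (PresentedGroup.of b.1 : PresentedGroup (relators Rel))
      else (PresentedGroup.of b.1)⁻¹)).prod = g⁻¹ * h ∧ (l.length : ℕ∞) = n}

/-- `W` and `U` are `k`-fellow-travellers with respect to the induced metric. -/
noncomputable def KFT {X : Type*} (Rel : Set (List X × List X)) (k : ℕ)
    (W U : List X) : Prop :=
  ∀ n : ℕ, gdist Rel (toG Rel (W.take n)) (toG Rel (U.take n)) ≤ (k : ℕ∞)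

/-- `L` is an automatic structure for the semigroup presented by `Rel`. -/
def IsAutomaticStructure {X : Type*} (Rel : Set (List X × List X))
    (L : Language X) : Prop :=
  L.IsRegular ∧ (∀ u : List X, ∃ w ∈ L, SGRel Rel w u) ∧
  ∀ x : Option X, Language.IsRegular
    {p : List (Option X × Option X) | ∃ W ∈ L, ∃ U ∈ L,
      SGRel Rel (W ++ x.toList) U ∧ p = pad W U}

/-- The semigroup presented by `Rel` is automatic. -/
def IsAutomatic {X : Type*} (Rel : Set (List X × List X)) : Prop :=
  ∃ L : Language X, IsAutomaticStructure Rel L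

/-- The three generators of the example semigroup `⟨a,b,c | abcc = cba⟩`. -/
inductive Gen : Type | a | b | c

/-- The single defining relation `abcc = cba`. -/
def exRel : Set (List Gen × List Gen) :=
  {([Gen.a, Gen.b, Gen.c, Gen.c], [Gen.c, Gen.b, Gen.a])}

/-- The word `V_n = (abc)^n`. -/
def Vword (n : ℕ) : List Gen := (List.replicate n [Gen.a, Gen.b, Gen.c]).flatten

/-- The word `U_n = c(ba)^n`. -/
def Uword (n : ℕ) : List Gen := Gen.c :: (List.replicate n [Gen.b, Gen.a]).flatten

/-- In `S = ⟨a,b,c | abcc = cba⟩`, for every `n` one has `(abc)^n c = c(ba)^n` in `S`. -/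
theorem abc_pow_c_eq_c_ba_pow (n : ℕ) :
    SGRel exRel (Vword n ++ [Gen.c]) (Uword n) := by
  induction n with
  | zero => exact Con.refl _ _
  | succ n ih =>
    unfold SGRel at *
    have hV : FreeMonoid.ofList (Vword (n+1) ++ [Gen.c])
        = FreeMonoid.ofList [Gen.a, Gen.b, Gen.c] * FreeMonoid.ofList (Vword n ++ [Gen.c]) := by
      rw [← FreeMonoid.ofList_append]; simp [Vword, List.replicate_succ]
    have hU1 : FreeMonoid.ofList [Gen.a, Gen.b, Gen.c] * FreeMonoid.ofList (Uword n)
        = FreeMonoid.ofList [Gen.a, Gen.b, Gen.c, Gen.c]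
          * FreeMonoid.ofList ((List.replicate n [Gen.b, Gen.a]).flatten) := by
      rw [← FreeMonoid.ofList_append, ← FreeMonoid.ofList_append]; simp [Uword]
    have hU2 : FreeMonoid.ofList [Gen.c, Gen.b, Gen.a]
          * FreeMonoid.ofList ((List.replicate n [Gen.b, Gen.a]).flatten)
        = FreeMonoid.ofList (Uword (n+1)) := by
      rw [← FreeMonoid.ofList_append]; simp [Uword, List.replicate_succ]
    have hrel : conGen (fun a b : FreeMonoid Gen => ∃ p ∈ exRel,
        a = FreeMonoid.ofList p.1 ∧ b = FreeMonoid.ofList p.2)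
        (FreeMonoid.ofList [Gen.a, Gen.b, Gen.c, Gen.c]) (FreeMonoid.ofList [Gen.c, Gen.b, Gen.a]) :=
      ConGen.Rel.of _ _ ⟨_, rfl, rfl, rfl⟩
    rw [hV]
    refine (Con.mul _ (Con.refl _ _) ih).trans ?_
    rw [hU1, ← hU2]
    exact Con.mul _ hrel (Con.refl _ _)
end

section
/- In the semigroup S = ⟨a,b,c | abcc = cba⟩, the word U_n = c(ba)^n is a geodesic of length 2n+1, i.e., every word equal to c(ba)^n in S has length at least 2n+1. -/
deriving instance DecidableEq for Gen

/-- The invariant: counts of `a` and `b` and `min(#c,1)` are preserved by the congruence. -/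
lemma exRel_invariant {w u : FreeMonoid Gen}
    (h : ConGen.Rel (fun a b : FreeMonoid Gen => ∃ p ∈ exRel,
      a = FreeMonoid.ofList p.1 ∧ b = FreeMonoid.ofList p.2) w u) :
    w.toList.count Gen.a = u.toList.count Gen.a ∧
    w.toList.count Gen.b = u.toList.count Gen.b ∧
    min (w.toList.count Gen.c) 1 = min (u.toList.count Gen.c) 1 := by
  induction h with
  | of x y hxy =>
    obtain ⟨p, hp, hx, hy⟩ := hxy
    simp only [exRel, Set.mem_singleton_iff] at hp
    subst hp hx hy
    refine ⟨?_, ?_, ?_⟩ <;> decide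
  | refl => exact ⟨rfl, rfl, rfl⟩
  | symm _ ih => exact ⟨ih.1.symm, ih.2.1.symm, ih.2.2.symm⟩
  | trans _ _ ih1 ih2 =>
    exact ⟨ih1.1.trans ih2.1, ih1.2.1.trans ih2.2.1, ih1.2.2.trans ih2.2.2⟩
  | mul _ _ ih1 ih2 =>
    simp only [FreeMonoid.toList_mul, List.count_append]
    omega

lemma length_eq_counts (l : List Gen) :
    l.length = l.count Gen.a + l.count Gen.b + l.count Gen.c := by
  induction l with
  | nil => rfl
  | cons x xs ih =>
    cases x <;> simp [List.count_cons, ih] <;> ring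

lemma flatten_counts (n : ℕ) :
    ((List.replicate n [Gen.b, Gen.a]).flatten.count Gen.a = n ∧
     (List.replicate n [Gen.b, Gen.a]).flatten.count Gen.b = n ∧
     (List.replicate n [Gen.b, Gen.a]).flatten.count Gen.c = 0) := by
  induction n with
  | zero => refine ⟨?_, ?_, ?_⟩ <;> decide
  | succ k ih =>
    obtain ⟨h1, h2, h3⟩ := ih
    rw [List.replicate_succ, List.flatten_cons]
    simp only [List.count_append]
    refine ⟨?_, ?_, ?_⟩ <;> simp [h1, h2, h3, List.count_cons] <;> omega

lemma Uword_counts (n : ℕ) :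
    (Uword n).count Gen.a = n ∧ (Uword n).count Gen.b = n ∧
    (Uword n).count Gen.c = 1 := by
  obtain ⟨h1, h2, h3⟩ := flatten_counts n
  simp only [Uword, List.count_cons, h1, h2, h3]
  refine ⟨?_, ?_, ?_⟩ <;> simp

/-- In `S = ⟨a,b,c | abcc = cba⟩`, the word `U_n = c(ba)^n` is a geodesic of length
`2n+1`: every word equal to it in `S` has length at least `2n+1`. -/
theorem Uword_geodesic (n : ℕ) (U : List Gen) (h : SGRel exRel U (Uword n)) :
    2 * n + 1 ≤ U.length := by
  have h' : ConGen.Rel (fun a b : FreeMonoid Gen => ∃ p ∈ exRel,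
      a = FreeMonoid.ofList p.1 ∧ b = FreeMonoid.ofList p.2)
      (FreeMonoid.ofList U) (FreeMonoid.ofList (Uword n)) := h
  have inv := exRel_invariant h'
  rw [FreeMonoid.toList_ofList, FreeMonoid.toList_ofList] at inv
  obtain ⟨ha, hb, hc⟩ := inv
  obtain ⟨ua, ub, uc⟩ := Uword_counts n
  rw [length_eq_counts U]
  rw [ua] at ha
  rw [ub] at hb
  rw [uc] at hc
  omega
end

section
/- In the semigroup S = ⟨a,b,c | abcc = cba⟩, for any constant k there exists n such that the geodesics V_n = (abc)^n and U_n = c(ba)^n satisfy V_n·c =_S U_n (so their endpoints are at distance at most 1 in the Cayley graph) but V_n and U_n are not k-fellow-travellers. Consequently, the set of all geodesics of S does not have the fellow-traveller property. -/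
/-- A word is a geodesic if no shorter word represents the same element of `S`. -/
def IsGeodesic (W : List Gen) : Prop :=
  ∀ U : List Gen, SGRel exRel W U → W.length ≤ U.length

open Relation

namespace List

variable {X : Type*}

def Rewrites (l r : List X) (u v : List X) : Prop :=
  ∃ x y, u = x ++ l ++ y ∧ v = x ++ r ++ y

/-- Two occurrences of `l` in a word never overlap. -/
def SelfOverlapFree (l : List X) : Prop :=
  ∀ m y y' : List X, l ++ y = m ++ l ++ y' → m = [] ∨ l <+: m

variable {l r : List X}

theorem Rewrites.append_left {u v : List X} (h : Rewrites l r u v) (w : List X) :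
    Rewrites l r (w ++ u) (w ++ v) := by
  obtain ⟨x, y, rfl, rfl⟩ := h
  exact ⟨w ++ x, y, by simp, by simp⟩

theorem Rewrites.append_right {u v : List X} (h : Rewrites l r u v) (w : List X) :
    Rewrites l r (u ++ w) (v ++ w) := by
  obtain ⟨x, y, rfl, rfl⟩ := h
  exact ⟨x, y ++ w, by simp, by simp⟩

theorem Rewrites.length_le (hlen : r.length ≤ l.length) {u v : List X}
    (h : Rewrites l r u v) : v.length ≤ u.length := by
  obtain ⟨x, y, rfl, rfl⟩ := h
  simp only [length_append]
  omega

theorem Rewrites.infix {u v : List X} (h : Rewrites l r u v) : l <:+: u := by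
  obtain ⟨x, y, rfl, -⟩ := h
  exact ⟨x, y, rfl⟩

theorem reflTransGen_rewrites_append {u v u' v' : List X}
    (h : ReflTransGen (Rewrites l r) u v) (h' : ReflTransGen (Rewrites l r) u' v') :
    ReflTransGen (Rewrites l r) (u ++ u') (v ++ v') :=
  (h.lift (· ++ u') fun _ _ hs => hs.append_right u').trans
    (h'.lift (v ++ ·) fun _ _ hs => hs.append_left v)

theorem length_le_of_reflTransGen_rewrites (hlen : r.length ≤ l.length) {u v : List X}
    (h : ReflTransGen (Rewrites l r) u v) : v.length ≤ u.length := by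
  induction h with
  | refl => rfl
  | tail _ hs ih => exact (hs.length_le hlen).trans ih

theorem SelfOverlapFree.eq_or_eq_append (hl : SelfOverlapFree l) {m y y' : List X}
    (h : l ++ y = m ++ l ++ y') :
    (m = [] ∧ y = y') ∨ ∃ q, m = l ++ q ∧ y = q ++ l ++ y' := by
  rcases hl m y y' h with rfl | ⟨q, rfl⟩
  · exact Or.inl ⟨rfl, by simpa using h⟩
  · exact Or.inr ⟨q, rfl, append_cancel_left (as := l) (by simpa using h)⟩

/-- The two redexes are at positions `|x|` and `|x ++ m|`. -/
theorem SelfOverlapFree.rewrites_joinable_of_prefix (hl : SelfOverlapFree l)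
    {x m y y' : List X} (h : l ++ y = m ++ l ++ y') :
    ∃ d, ReflGen (Rewrites l r) (x ++ r ++ y) d ∧
      ReflGen (Rewrites l r) (x ++ m ++ r ++ y') d := by
  rcases hl.eq_or_eq_append h with ⟨rfl, rfl⟩ | ⟨q, rfl, rfl⟩
  · exact ⟨_, .refl, by simpa using ReflGen.refl⟩
  · refine ⟨x ++ r ++ q ++ r ++ y', .single ⟨x ++ r ++ q, y', ?_, rfl⟩,
      .single ⟨x, q ++ r ++ y', ?_, ?_⟩⟩ <;> simp

theorem SelfOverlapFree.rewrites_diamond (hl : SelfOverlapFree l) (u v w : List X)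
    (hv : Rewrites l r u v) (hw : Rewrites l r u w) :
    ∃ d, ReflGen (Rewrites l r) v d ∧ ReflTransGen (Rewrites l r) w d := by
  obtain ⟨x, y, rfl, rfl⟩ := hv
  obtain ⟨x', y', hu, rfl⟩ := hw
  simp only [append_assoc] at hu
  rcases append_eq_append_iff.1 hu with ⟨m, rfl, h⟩ | ⟨m, rfl, h⟩
  · obtain ⟨d, hv, hw⟩ := hl.rewrites_joinable_of_prefix (r := r) (x := x)
      (m := m) (by simpa using h)
    exact ⟨d, hv, by simpa using hw.to_reflTransGen⟩
  · obtain ⟨d, hw, hv⟩ := hl.rewrites_joinable_of_prefix (r := r) (x := x')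
      (m := m) (by simpa using h)
    exact ⟨d, by simpa using hv, hw.to_reflTransGen⟩

end List

namespace SGRel

variable {X : Type*} {Rel : Set (List X × List X)}

theorem refl (w : List X) : SGRel Rel w w := (conGen _).refl _

theorem trans {u v w : List X} (h₁ : SGRel Rel u v) (h₂ : SGRel Rel v w) : SGRel Rel u w :=
  (conGen _).trans h₁ h₂

theorem append {u v u' v' : List X} (h : SGRel Rel u v) (h' : SGRel Rel u' v') :
    SGRel Rel (u ++ u') (v ++ v') := by
  unfold SGRel at *
  rw [FreeMonoid.ofList_append, FreeMonoid.ofList_append]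
  exact (conGen _).mul h h'

theorem of_mem {u v : List X} (h : (u, v) ∈ Rel) : SGRel Rel u v :=
  ConGen.Rel.of _ _ ⟨(u, v), h, rfl, rfl⟩

variable {l r : List X}

theorem join_rewrites (hl : l.SelfOverlapFree) {u v : List X} (h : SGRel {(l, r)} u v) :
    Join (ReflTransGen (List.Rewrites l r)) u v := by
  let c : Con (FreeMonoid X) :=
    { r := fun a b => Join (ReflTransGen (List.Rewrites l r)) a.toList b.toList
      iseqv := (equivalence_join_reflTransGen hl.rewrites_diamond).comap _
      mul' := by
        intro a b a' b' hab hab'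
        obtain ⟨d, ha, hb⟩ : Join _ a.toList b.toList := hab
        obtain ⟨d', ha', hb'⟩ : Join _ a'.toList b'.toList := hab'
        simp only [FreeMonoid.toList_mul]
        exact ⟨d ++ d', List.reflTransGen_rewrites_append ha ha',
          List.reflTransGen_rewrites_append hb hb'⟩ }
  refine (Con.conGen_le (c := c)).2 ?_ h
  rintro _ _ ⟨p, hp, rfl, rfl⟩
  rw [Set.mem_singleton_iff] at hp
  subst hp
  exact ⟨r, .single ⟨[], [], by simp, by simp⟩, .refl⟩

theorem length_le_of_not_infix (hl : l.SelfOverlapFree) (hlen : r.length ≤ l.length)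
    {w u : List X} (hw : ¬ l <:+: w) (h : SGRel {(l, r)} w u) : w.length ≤ u.length := by
  obtain ⟨d, hwd, hud⟩ := join_rewrites hl h
  rcases hwd.cases_head with rfl | ⟨_, hs, -⟩
  · exact List.length_le_of_reflTransGen_rewrites hlen hud
  · exact absurd hs.infix hw

end SGRel

section WordMetric

variable {X : Type*} {Rel : Set (List X × List X)}

theorem natAbs_toAdd_prod_le_length (φ : PresentedGroup (relators Rel) →* Multiplicative ℤ)
    (hφ : ∀ x, (φ (PresentedGroup.of x)).toAdd.natAbs ≤ 1) (w : List (X × Bool)) :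
    (φ (w.map fun b => if b.2 then (PresentedGroup.of b.1 : PresentedGroup (relators Rel))
      else (PresentedGroup.of b.1)⁻¹).prod).toAdd.natAbs ≤ w.length := by
  induction w with
  | nil => simp
  | cons x w ih =>
    have hx : (φ (if x.2 then PresentedGroup.of x.1 else (PresentedGroup.of x.1)⁻¹)).toAdd.natAbs
        ≤ 1 := by
      split <;> simp [hφ]
    simp only [List.map_cons, List.prod_cons, map_mul, toAdd_mul, List.length_cons]
    exact (Int.natAbs_add_le _ _).trans (by omega)

theorem natAbs_toAdd_le_gdist (φ : PresentedGroup (relators Rel) →* Multiplicative ℤ)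
    (hφ : ∀ x, (φ (PresentedGroup.of x)).toAdd.natAbs ≤ 1)
    (g h : PresentedGroup (relators Rel)) : ((φ (g⁻¹ * h)).toAdd.natAbs : ℕ∞) ≤ gdist Rel g h := by
  refine le_sInf ?_
  rintro _ ⟨w, hw, rfl⟩
  rw [← hw]
  exact_mod_cast natAbs_toAdd_prod_le_length φ hφ w

def weightHom (wt : X → ℤ) (hwt : ∀ p ∈ Rel, (p.1.map wt).sum = (p.2.map wt).sum) :
    PresentedGroup (relators Rel) →* Multiplicative ℤ :=
  PresentedGroup.toGroup (f := Multiplicative.ofAdd ∘ wt) <| by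
    rintro _ ⟨p, hp, rfl⟩
    simp only [map_mul, map_inv, map_list_prod, List.map_map, Function.comp_def,
      FreeGroup.lift_apply_of]
    have hsum (l : List X) : (l.map fun x => Multiplicative.ofAdd (wt x)).prod =
        Multiplicative.ofAdd (l.map wt).sum := by
      rw [ofAdd_list_prod, List.map_map]; rfl
    rw [mul_inv_eq_one, hsum, hsum, hwt p hp]

theorem weightHom_toG (wt : X → ℤ) (hwt : ∀ p ∈ Rel, (p.1.map wt).sum = (p.2.map wt).sum)
    (w : List X) : weightHom wt hwt (toG Rel w) = Multiplicative.ofAdd (w.map wt).sum := by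
  simp only [toG, map_list_prod, List.map_map, Function.comp_def, weightHom,
    PresentedGroup.toGroup.of]
  rw [ofAdd_list_prod, List.map_map]; rfl

theorem natAbs_weight_sub_le_gdist (wt : X → ℤ)
    (hwt : ∀ p ∈ Rel, (p.1.map wt).sum = (p.2.map wt).sum) (hwt₁ : ∀ x, (wt x).natAbs ≤ 1)
    (u w : List X) :
    (((w.map wt).sum - (u.map wt).sum).natAbs : ℕ∞) ≤ gdist Rel (toG Rel u) (toG Rel w) := by
  have := natAbs_toAdd_le_gdist (weightHom wt hwt) (by simpa [weightHom] using hwt₁)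
    (toG Rel u) (toG Rel w)
  simpa [weightHom_toG, sub_eq_neg_add, Function.comp_def] using this

end WordMetric

open Gen

theorem selfOverlapFree_abcc : List.SelfOverlapFree [a, b, c, c] := by
  intro m y y' h
  rcases m with _ | ⟨g₁, _ | ⟨g₂, _ | ⟨g₃, _ | ⟨g₄, q⟩⟩⟩⟩
  · exact .inl rfl
  all_goals simp only [List.cons_append, List.nil_append, List.cons.injEq] at h
  · simp_all
  · simp_all
  · simp_all
  · obtain ⟨rfl, rfl, rfl, rfl, -⟩ := h
    exact .inr ⟨q, rfl⟩

theorem Vword_succ (n : ℕ) : Vword (n + 1) = a :: b :: c :: Vword n := by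
  simp [Vword, List.replicate_succ]

theorem Vword_add (s t : ℕ) : Vword (s + t) = Vword s ++ Vword t := by
  simp only [Vword, List.replicate_add, List.flatten_append]

theorem length_Vword (n : ℕ) : (Vword n).length = 3 * n := by
  simp [Vword, List.length_flatten, List.sum_replicate, mul_comm]

theorem length_Uword (n : ℕ) : (Uword n).length = 2 * n + 1 := by
  simp [Uword, List.length_flatten, List.sum_replicate, mul_comm]

theorem not_infix_cc_cons_Vword (n : ℕ) : ¬ [c, c] <:+: c :: Vword n := by
  induction n with
  | zero => exact fun h => by simpa [Vword] using h.length_le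
  | succ n ih => simp [Vword_succ, List.infix_cons_iff, ih]

theorem not_infix_cc_Uword (n : ℕ) : ¬ [c, c] <:+: Uword n := by
  have hc : c ∉ (List.replicate n [b, a]).flatten := by simp [List.mem_replicate]
  rw [Uword, List.infix_cons_iff]
  rintro (h | h)
  · exact hc (((List.prefix_cons_inj c).1 h).subset (by simp))
  · exact hc (h.subset (by simp))

theorem isGeodesic_of_not_infix_cc {W : List Gen} (hW : ¬ [c, c] <:+: W) : IsGeodesic W :=
  fun _ => SGRel.length_le_of_not_infix selfOverlapFree_abcc (by simp)
    fun h => hW (List.infix_append' [a, b] [c, c] [] |>.trans h)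

theorem isGeodesic_Vword (n : ℕ) : IsGeodesic (Vword n) :=
  isGeodesic_of_not_infix_cc fun h =>
    not_infix_cc_cons_Vword n (h.trans (List.suffix_cons c _).isInfix)

theorem isGeodesic_Uword (n : ℕ) : IsGeodesic (Uword n) :=
  isGeodesic_of_not_infix_cc (not_infix_cc_Uword n)

theorem sgRel_Vword_append_c (n : ℕ) : SGRel exRel (Vword n ++ [c]) (Uword n) := by
  induction n with
  | zero => exact .refl _
  | succ n ih =>
    have hrel : SGRel exRel [a, b, c, c] [c, b, a] := .of_mem rfl
    have hU : Uword (n + 1) = [c, b, a] ++ (List.replicate n [b, a]).flatten := by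
      simp [Uword, List.replicate_succ]
    rw [Vword_succ, hU]
    exact ((SGRel.refl [a, b, c]).append ih).trans (hrel.append (.refl _))

def aWeight : Gen → ℤ
  | a => 1
  | _ => 0

theorem natAbs_sub_le_gdist_Vword_Uword (t n : ℕ) :
    (((n : ℤ) - t).natAbs : ℕ∞) ≤ gdist exRel (toG exRel (Vword t)) (toG exRel (Uword n)) := by
  have hwt : ∀ p ∈ exRel, (p.1.map aWeight).sum = (p.2.map aWeight).sum := by
    rintro _ rfl
    rfl
  have hwt₁ : ∀ x, (aWeight x).natAbs ≤ 1 := by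
    rintro (_ | _ | _) <;> decide
  simpa [aWeight, Vword, Uword, List.map_flatten, List.sum_flatten] using
    natAbs_weight_sub_le_gdist aWeight hwt hwt₁ (Vword t) (Uword n)

/-- In `S = ⟨a,b,c | abcc = cba⟩`, for any `k` there is `n` such that the geodesics
`V_n = (abc)^n` and `U_n = c(ba)^n` satisfy `V_n · c = U_n` in `S` (so their endpoints
are at distance at most 1 in the Cayley graph) but `V_n` and `U_n` are not
`k`-fellow-travellers; hence the set of geodesics lacks the fellow-traveller property. -/
theorem geodesics_not_fellow_travelling (k : ℕ) :
    ∃ n : ℕ, IsGeodesic (Vword n) ∧ IsGeodesic (Uword n) ∧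
      SGRel exRel (Vword n ++ [Gen.c]) (Uword n) ∧
      ¬ KFT exRel k (Vword n) (Uword n) := by
  refine ⟨3 * k + 4, isGeodesic_Vword _, isGeodesic_Uword _, sgRel_Vword_append_c _, ?_⟩
  intro hKFT
  -- at time `3(2k+3)` the paths are at `V_{2k+3}` and `U_{3k+4}`, with `a`-counts `k+1` apart
  have hV : (Vword (3 * k + 4)).take (3 * (2 * k + 3)) = Vword (2 * k + 3) := by
    rw [show 3 * k + 4 = (2 * k + 3) + (k + 1) by omega, Vword_add]
    exact List.take_left' (length_Vword _)
  have hU : (Uword (3 * k + 4)).take (3 * (2 * k + 3)) = Uword (3 * k + 4) :=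
    List.take_of_length_le (by rw [length_Uword]; omega)
  have hgap := (natAbs_sub_le_gdist_Vword_Uword (2 * k + 3) (3 * k + 4)).trans
    (hV ▸ hU ▸ hKFT (3 * (2 * k + 3)))
  rw [show ((3 * k + 4 : ℕ) - (2 * k + 3 : ℕ) : ℤ).natAbs = k + 1 by omega] at hgap
  exact absurd (ENat.natCast_le_natCast.1 hgap) (by omega)
end

section
/- Let A = φ_{W1}⋯φ_{Wn} ∈ Φ* be a non-admissible word, i.e., W_i W_{i+1} ∈ B for some i. Then there exists B ∈ Φ* with |B| < |A|, η(A) = η(B) (hence A and B represent the same semigroup element), and A and B are 1-fellow-travellers; moreover B precedes A in the Piefer order. -/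
/-- `𝓑`: the set of (nonempty) subwords of defining words. -/
def Bset {X : Type*} (Rel : Set (List X × List X)) : Set (List X) :=
  {W | W ≠ [] ∧ ∃ D ∈ defWords Rel, W <:+: D}

/-- A word over the alphabet `Φ = {φ_W : W ∈ 𝓑}`, recorded as its list of blocks. -/
def IsPhiWord {X : Type*} (Rel : Set (List X × List X)) (A : List (List X)) : Prop :=
  ∀ W ∈ A, W ∈ Bset Rel

/-- `A = φ_{W₁}⋯φ_{Wₙ}` is admissible: no product of consecutive blocks lies in `𝓑`. -/
def Admissible {X : Type*} (Rel : Set (List X × List X)) (A : List (List X)) : Prop :=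
  List.Chain' (fun u v => (u ++ v) ∉ Bset Rel) A

/-- The block preceding position `i` (`0`-based), with `W₀ = ε`. -/
def prevBlock {X : Type*} (A : List (List X)) (i : ℕ) : List X :=
  if i = 0 then [] else A.getD (i - 1) []

/-- The `i`-th (0-based) coordinate of the auxiliary vector `κ_A` equals `1`:
there are decompositions `W_{i-1} = q ++ p` and `W_{i+1} = s ++ t` with
`p ++ W_i ++ s` a defining word whose piece-length exceeds that of its complement. -/
def KappaOne {X : Type*} (Rel : Set (List X × List X)) (A : List (List X)) (i : ℕ) : Prop :=
  ∃ p s q t : List X,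
    prevBlock A i = q ++ p ∧ A.getD (i + 1) [] = s ++ t ∧
    (p ++ A.getD i [] ++ s) ∈ defWords Rel ∧
    ∃ C : List X, ((p ++ A.getD i [] ++ s, C) ∈ Rel ∨ (C, p ++ A.getD i [] ++ s) ∈ Rel) ∧
      pieceLength (defWords Rel) C < pieceLength (defWords Rel) (p ++ A.getD i [] ++ s)

/-- `A` is efficient: admissible and `κ_A` is the zero vector. -/
def Efficient {X : Type*} (Rel : Set (List X × List X)) (A : List (List X)) : Prop :=
  Admissible Rel A ∧ ∀ i < A.length, ¬ KappaOne Rel A i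

/-- Condition (†): each defining relation `L = R` satisfies `lp L + lp R ≥ 7`. -/
def Dagger {X : Type*} (Rel : Set (List X × List X)) : Prop :=
  ∀ p ∈ Rel, 7 ≤ pieceLength (defWords Rel) p.1 + pieceLength (defWords Rel) p.2

/-- The Piefer order: `A ≼ B` iff `κ_A = κ_B` or `κ_A` precedes `κ_B` in shortlex. -/
def PieferLe {X : Type*} (Rel : Set (List X × List X)) (A B : List (List X)) : Prop :=
  A.length < B.length ∨ (A.length = B.length ∧
    ((∀ i < B.length, (KappaOne Rel A i ↔ KappaOne Rel B i)) ∨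
      ∃ j < B.length, (∀ i < j, (KappaOne Rel A i ↔ KappaOne Rel B i)) ∧
        ¬ KappaOne Rel A j ∧ KappaOne Rel B j))

/-- `A` is left-greedy: no block extended by the first letter of the next block is in `𝓑`. -/
def LeftGreedy {X : Type*} (Rel : Set (List X × List X)) (A : List (List X)) : Prop :=
  List.Chain' (fun u v => ∀ x ∈ v.head?, (u ++ [x]) ∉ Bset Rel) A

/-- The word metric on the co-presented group with respect to the generating set
`𝓑 ∪ 𝓑⁻¹`; its restriction to the semigroup is the induced metric `d_Φ`. -/
noncomputable def dPhi {X : Type*} (Rel : Set (List X × List X))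
    (g h : PresentedGroup (relators Rel)) : ℕ∞ :=
  sInf {n : ℕ∞ | ∃ l : List (List X × Bool), (∀ b ∈ l, b.1 ∈ Bset Rel) ∧
    (l.map (fun b => if b.2 then toG Rel b.1 else (toG Rel b.1)⁻¹)).prod = g⁻¹ * h ∧
    (l.length : ℕ∞) = n}


lemma toG_append {X : Type*} (Rel : Set (List X × List X)) (u v : List X) :
    toG Rel (u ++ v) = toG Rel u * toG Rel v := by
  simp [toG]

lemma dPhi_self_le_one {X : Type*} (Rel : Set (List X × List X))
    (g : PresentedGroup (relators Rel)) : dPhi Rel g g ≤ 1 := by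
  have h0 : (0 : ℕ∞) ∈ {n : ℕ∞ | ∃ l : List (List X × Bool), (∀ b ∈ l, b.1 ∈ Bset Rel) ∧
      (l.map (fun b => if b.2 then toG Rel b.1 else (toG Rel b.1)⁻¹)).prod = g⁻¹ * g ∧
      (l.length : ℕ∞) = n} := ⟨[], by simp, by simp, by simp⟩
  exact le_trans (sInf_le h0) (by norm_num)

lemma dPhi_mul_le_one {X : Type*} (Rel : Set (List X × List X))
    (g : PresentedGroup (relators Rel)) (b : List X) (hb : b ∈ Bset Rel) :
    dPhi Rel g (g * toG Rel b) ≤ 1 := by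
  have h1 : (1 : ℕ∞) ∈ {n : ℕ∞ | ∃ l : List (List X × Bool), (∀ c ∈ l, c.1 ∈ Bset Rel) ∧
      (l.map (fun c => if c.2 then toG Rel c.1 else (toG Rel c.1)⁻¹)).prod = g⁻¹ * (g * toG Rel b) ∧
      (l.length : ℕ∞) = n} := ⟨[(b, true)], by simpa using hb, by simp [mul_assoc], by simp⟩
  exact sInf_le h1

/-- If `A ∈ Φ*` is not admissible, then there is `B ∈ Φ*` with `|B| < |A|`,
`η(A) = η(B)`, `A` and `B` `1`-fellow-travellers in `d_Φ`, and `B` preceding `A`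
in the Piefer order. -/
theorem refute_non_admissible {X : Type*} (Rel : Set (List X × List X))
    (hK : K32 Rel) (hD : Dagger Rel)
    (A : List (List X)) (hA : IsPhiWord Rel A)
    (hnonadm : ∃ i : ℕ, i + 1 < A.length ∧
      (A.getD i [] ++ A.getD (i + 1) []) ∈ Bset Rel) :
    ∃ B : List (List X), IsPhiWord Rel B ∧ B.length < A.length ∧
      B.flatten = A.flatten ∧
      (∀ j : ℕ, dPhi Rel (toG Rel (A.take j).flatten) (toG Rel (B.take j).flatten) ≤ 1) ∧
      PieferLe Rel B A := by
  obtain ⟨i, hi, hmem⟩ := hnonadm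
  have hii : i < A.length := by omega
  set B : List (List X) := A.take i ++ (A.getD i [] ++ A.getD (i + 1) []) :: A.drop (i + 2)
    with hB
  have hlenti : (A.take i).length = i := by
    simp [List.length_take]; omega
  have hlenB : B.length = A.length - 1 := by
    simp [hB, List.length_take, List.length_drop]; omega
  have hgetDi : A.getD i [] = A[i] := List.getD_eq_getElem A [] hii
  have hgetDi1 : A.getD (i+1) [] = A[i+1] := List.getD_eq_getElem A [] hi
  -- prefix flattening facts
  have htake_le : ∀ j : ℕ, j ≤ i → B.take j = A.take j := by
    intro j hj
    rw [hB, List.take_append_of_le_length (by omega), List.take_take, min_eq_left hj]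
  have htake_ge : ∀ j : ℕ, i + 1 ≤ j → (B.take j).flatten = (A.take (j+1)).flatten := by
    intro j hj
    have h1 : B.take j = A.take i ++
        ((A.getD i [] ++ A.getD (i + 1) []) :: A.drop (i + 2)).take (j - i) := by
      rw [hB, List.take_append, hlenti,
        List.take_of_length_le (le_of_eq_of_le hlenti (by omega))]
    have h2 : ((A.getD i [] ++ A.getD (i + 1) []) :: A.drop (i + 2)).take (j - i)
        = (A.getD i [] ++ A.getD (i + 1) []) :: (A.drop (i + 2)).take (j - i - 1) := by
      have : j - i = (j - i - 1) + 1 := by omega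
      rw [this, List.take_succ_cons]
      simp
    have h3 : A.take (j+1) = A.take (i+1+1) ++ (A.drop (i+2)).take (j - i - 1) := by
      have e : j + 1 = (i+1+1) + (j - i - 1) := by omega
      have e' : (i:ℕ)+1+1 = i+2 := by omega
      rw [e, List.take_add, e']
    have h4 : A.take (i+1+1) = A.take i ++ [A[i]] ++ [A[i+1]] := by
      have e1 : A.take (i+1) = A.take i ++ [A[i]] := by
        rw [List.take_succ, List.getElem?_eq_getElem hii]; rfl
      have e2 : A.take (i+2) = A.take (i+1) ++ [A[i+1]] := by
        rw [List.take_succ, List.getElem?_eq_getElem hi]; rfl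
      rw [e2, e1]
    rw [h1, h2, h3, h4, hgetDi, hgetDi1]
    simp only [List.flatten_append, List.flatten_cons, List.flatten_nil,
      List.append_assoc, List.append_nil]
  refine ⟨B, ?_, ?_, ?_, ?_, ?_⟩
  · -- IsPhiWord
    intro W hW
    rw [hB] at hW
    rcases List.mem_append.1 hW with h | h
    · exact hA W (List.mem_of_mem_take h)
    · rcases List.mem_cons.1 h with h | h
      · exact h ▸ hmem
      · exact hA W (List.mem_of_mem_drop h)
  · omega
  · -- flatten
    have h1 : B.take A.length = B := List.take_of_length_le (by omega)
    have h2 : A.take (A.length + 1) = A := List.take_of_length_le (by omega)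
    have := htake_ge A.length (by omega)
    rwa [h1, h2] at this
  · -- fellow travelling
    intro j
    rcases le_or_gt j i with hj | hj
    · rw [htake_le j hj]
      exact dPhi_self_le_one Rel _
    · rw [htake_ge j hj]
      rcases lt_or_ge j A.length with hjA | hjA
      · have : A.take (j+1) = A.take j ++ [A[j]] := by
          rw [List.take_succ, List.getElem?_eq_getElem hjA]; rfl
        rw [this, List.flatten_append, toG_append]
        have hbj : A[j] ∈ Bset Rel := hA _ (List.getElem_mem hjA)
        simpa using dPhi_mul_le_one Rel (toG Rel (A.take j).flatten) A[j] hbj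
      · have : A.take (j+1) = A.take j := by
          rw [List.take_of_length_le (by omega), List.take_of_length_le hjA]
        rw [this]
        exact dPhi_self_le_one Rel _
  · exact Or.inl (by omega)
end

section
/- Let A = φ_{W1}⋯φ_{Wn} ∈ Φ* be admissible. If for some index ℓ with 1 < ℓ ≤ n the word W_{ℓ-1} decomposes as W_{ℓ-1} = W′W″ with W″W_ℓ ∈ B, then lp(W″) ≤ 1. Symmetrically, if W_ℓ = W′W″ with W_{ℓ-1}W′ ∈ B, then lp(W′) ≤ 1. -/
/-! Both claims are instances of one fact: if `L S` and `S R` are subwords of defining words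
but `L S R` is not, then `S` is a piece, since otherwise the two occurrences of `S` sit at the
same position of the same defining word, which then contains `L S R`. Admissibility says exactly
that `W_{ℓ-1} W_ℓ` is not such a subword. -/

section

variable {X : Type*} {Rel : Set (List X × List X)}

theorem isPiece_of_overlap {L S R : List X} (hLS : L ++ S ∈ Bset Rel)
    (hSR : S ++ R ∈ Bset Rel) (hLSR : L ++ S ++ R ∉ Bset Rel) :
    IsPiece (defWords Rel) S := by
  obtain ⟨hne, D₁, hD₁, a, b, rfl⟩ := hLS
  obtain ⟨-, D₂, hD₂, c, d, rfl⟩ := hSR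
  refine ⟨_, hD₁, _, hD₂, a ++ L, b, c, R ++ d, by simp, by simp, ?_⟩
  by_contra! ⟨-, rfl⟩
  exact hLSR ⟨by simp_all, _, hD₁, a, d, by simp⟩

theorem pieceLength_le_one_of_isPiece {R : Set (List X)} {P : List X} (hP : IsPiece R P) :
    pieceLength R P ≤ 1 :=
  sInf_le ⟨[P], by simpa using hP⟩

theorem IsPhiWord.getD_mem_bset {A : List (List X)} (hA : IsPhiWord Rel A) {i : ℕ}
    (hi : i < A.length) : A.getD i [] ∈ Bset Rel := by
  rw [List.getD_eq_getElem _ _ hi]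
  exact hA _ (List.getElem_mem hi)

theorem Admissible.getD_append_getD_succ_notMem_bset {A : List (List X)}
    (hA : Admissible Rel A) {i : ℕ} (hi : i + 1 < A.length) :
    A.getD i [] ++ A.getD (i + 1) [] ∉ Bset Rel := by
  rw [List.getD_eq_getElem _ _ (by omega), List.getD_eq_getElem _ _ hi]
  exact hA.getElem i hi

end

theorem leftExt_not_too_long_general {X : Type*} (Rel : Set (List X × List X))
    (A : List (List X)) (hA : IsPhiWord Rel A) (hAdm : Admissible Rel A)
    (i : ℕ) (hi : 1 ≤ i) (hin : i < A.length) :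
    (∀ W' W'' : List X, A.getD (i - 1) [] = W' ++ W'' →
      (W'' ++ A.getD i []) ∈ Bset Rel → pieceLength (defWords Rel) W'' ≤ 1) ∧
    (∀ V' V'' : List X, A.getD i [] = V' ++ V'' →
      (A.getD (i - 1) [] ++ V') ∈ Bset Rel → pieceLength (defWords Rel) V' ≤ 1) := by
  obtain ⟨j, rfl⟩ := Nat.exists_eq_add_of_le' hi
  have hprev := hA.getD_mem_bset (i := j) (by omega)
  have hcur := hA.getD_mem_bset hin
  have hnot := hAdm.getD_append_getD_succ_notMem_bset hin
  simp only [Nat.add_sub_cancel]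
  constructor
  · intro W' W'' hsplit hB
    rw [hsplit] at hprev hnot
    exact pieceLength_le_one_of_isPiece (isPiece_of_overlap hprev hB hnot)
  · intro V' V'' hsplit hB
    rw [hsplit, ← List.append_assoc] at hnot
    rw [hsplit] at hcur
    exact pieceLength_le_one_of_isPiece (isPiece_of_overlap hB hcur hnot)

/-- Let `A = φ_{W₁}⋯φ_{Wₙ}` be admissible. If `W_{ℓ-1} = W' ++ W''` with
`W'' ++ W_ℓ ∈ 𝓑` then `lp W'' ≤ 1`; symmetrically, if `W_ℓ = V' ++ V''` with
`W_{ℓ-1} ++ V' ∈ 𝓑` then `lp V' ≤ 1`.  (Indices here are 0-based: `i = ℓ - 1`.) -/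
theorem leftExt_not_too_long {X : Type*} (Rel : Set (List X × List X))
    (hK : K32 Rel)
    (A : List (List X)) (hA : IsPhiWord Rel A) (hAdm : Admissible Rel A)
    (i : ℕ) (hi : 1 ≤ i) (hin : i < A.length) :
    (∀ W' W'' : List X, A.getD (i - 1) [] = W' ++ W'' →
      (W'' ++ A.getD i []) ∈ Bset Rel → pieceLength (defWords Rel) W'' ≤ 1) ∧
    (∀ V' V'' : List X, A.getD i [] = V' ++ V'' →
      (A.getD (i - 1) [] ++ V') ∈ Bset Rel → pieceLength (defWords Rel) V' ≤ 1) :=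
  leftExt_not_too_long_general Rel A hA hAdm i hi hin
end

section
/- Let A = φ_{W1}⋯φ_{Wn} be admissible with ⟨κ_A⟩_ℓ = 1. Then the decompositions W_{ℓ-1} = W′_{ℓ-1}W″_{ℓ-1} and W_{ℓ+1} = W′_{ℓ+1}W″_{ℓ+1} with W″_{ℓ-1}W_ℓW′_{ℓ+1} ∈ R are unique. -/
/-!
Two different placements of `W_ℓ` inside defining words would make `W_ℓ` a piece. It is not:
by admissibility, the parts `W″_{ℓ-1}` and `W′_{ℓ+1}` of the marked defining word are empty or
pieces, so if `W_ℓ` were a piece that defining word would have piece-length at most `3`, while by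
(†) the longer side of a relation has piece-length at least `4`.
-/

section PieceLength

variable {X : Type*} (R : Set (List X))

theorem pieceLength_nil : pieceLength R [] = 0 :=
  nonpos_iff_eq_zero.mp (sInf_le ⟨[], by simp, rfl, rfl⟩)

variable {R}

theorem IsPiece.pieceLength_le_one {P : List X} (hP : IsPiece R P) : pieceLength R P ≤ 1 :=
  sInf_le ⟨[P], by simpa using hP, by simp, rfl⟩

theorem exists_pieces_of_pieceLength_ne_top {W : List X} (hW : pieceLength R W ≠ ⊤) :
    ∃ l : List (List X), (∀ P ∈ l, IsPiece R P) ∧ l.flatten = W ∧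
      (l.length : ℕ∞) = pieceLength R W := by
  have hne : {n : ℕ∞ | ∃ l : List (List X),
      (∀ P ∈ l, IsPiece R P) ∧ l.flatten = W ∧ (l.length : ℕ∞) = n}.Nonempty :=
    Set.nonempty_iff_ne_empty.mpr fun h => hW (by rw [pieceLength, h, sInf_empty])
  exact csInf_mem hne

theorem pieceLength_append_le (u v : List X) :
    pieceLength R (u ++ v) ≤ pieceLength R u + pieceLength R v := by
  rcases eq_or_ne (pieceLength R u) ⊤ with hu | hu
  · simp [hu]
  rcases eq_or_ne (pieceLength R v) ⊤ with hv | hv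
  · simp [hv]
  obtain ⟨l₁, h₁, rfl, e₁⟩ := exists_pieces_of_pieceLength_ne_top hu
  obtain ⟨l₂, h₂, rfl, e₂⟩ := exists_pieces_of_pieceLength_ne_top hv
  refine sInf_le ⟨l₁ ++ l₂, ?_, by simp, ?_⟩
  · simpa [or_imp, forall_and] using And.intro h₁ h₂
  · simp [← e₁, ← e₂]

end PieceLength

section Decomposition

variable {X : Type*} {Rel : Set (List X × List X)}

theorem Dagger.four_le_pieceLength (hDag : Dagger Rel) {D C : List X}
    (hC : (D, C) ∈ Rel ∨ (C, D) ∈ Rel)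
    (hlt : pieceLength (defWords Rel) C < pieceLength (defWords Rel) D) :
    4 ≤ pieceLength (defWords Rel) D := by
  have h7 : 7 ≤ pieceLength (defWords Rel) D + pieceLength (defWords Rel) C := by
    rcases hC with hC | hC
    · exact hDag _ hC
    · exact (hDag _ hC).trans_eq (add_comm _ _)
  by_contra! h
  have h3 : pieceLength (defWords Rel) D ≤ 3 := Order.le_of_lt_succ h
  have : (7 : ℕ∞) ≤ 3 + 3 := h7.trans (add_le_add h3 (hlt.le.trans h3))
  norm_num at this

theorem Admissible.append_notMem_bset {A : List (List X)} (hAdm : Admissible Rel A) {j : ℕ}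
    (hj : j + 1 < A.length) : A[j] ++ A[j + 1] ∉ Bset Rel :=
  List.isChain_iff_getElem.mp hAdm j hj

theorem isPiece_of_append_notMem_bset_left {U W p q s : List X} (hU : U ∈ Bset Rel)
    (hUW : U ++ W ∉ Bset Rel) (hUqp : U = q ++ p) (hp : p ≠ [])
    (hD : p ++ W ++ s ∈ defWords Rel) : IsPiece (defWords Rel) p := by
  obtain ⟨-, D, hDmem, a, b, hab⟩ := hU
  by_cases haq : a ++ q = []
  · obtain rfl : q = [] := (List.append_eq_nil_iff.mp haq).2
    subst hUqp
    exact absurd ⟨by simp [hp], _, hD, [], s, by simp⟩ hUW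
  · exact ⟨_, hD, D, hDmem, [], W ++ s, a ++ q, b, by simp, by simp [← hab, hUqp],
      Or.inl (Ne.symm haq)⟩

theorem isPiece_of_append_notMem_bset_right {W V p s t : List X} (hV : V ∈ Bset Rel)
    (hWV : W ++ V ∉ Bset Rel) (hVst : V = s ++ t) (hs : s ≠ [])
    (hD : p ++ W ++ s ∈ defWords Rel) : IsPiece (defWords Rel) s := by
  obtain ⟨-, D, hDmem, a, b, hab⟩ := hV
  by_cases htb : t ++ b = []
  · obtain rfl : t = [] := (List.append_eq_nil_iff.mp htb).1
    subst hVst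
    exact absurd ⟨by simp [hs], _, hD, p, [], by simp⟩ hWV
  · exact ⟨_, hD, D, hDmem, p ++ W, [], a, t ++ b, by simp, by simp [← hab, hVst],
      Or.inr (Ne.symm htb)⟩

variable {A : List (List X)} {i : ℕ} {p s q t : List X}

theorem pieceLength_left_part_le_one (hA : IsPhiWord Rel A) (hAdm : Admissible Rel A)
    (hin : i < A.length) (hq : prevBlock A i = q ++ p)
    (hD : p ++ A.getD i [] ++ s ∈ defWords Rel) : pieceLength (defWords Rel) p ≤ 1 := by
  rcases eq_or_ne p [] with rfl | hp
  · simp [pieceLength_nil]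
  obtain ⟨j, rfl⟩ : ∃ j, i = j + 1 := by
    refine Nat.exists_eq_succ_of_ne_zero fun hi => hp ?_
    simp only [prevBlock, hi, if_true, List.nil_eq, List.append_eq_nil_iff] at hq
    exact hq.2
  rw [prevBlock, if_neg j.succ_ne_zero, Nat.add_sub_cancel,
    List.getD_eq_getElem _ _ (by omega)] at hq
  rw [List.getD_eq_getElem _ _ hin] at hD
  exact (isPiece_of_append_notMem_bset_left (hA _ (List.getElem_mem _))
    (hAdm.append_notMem_bset hin) hq hp hD).pieceLength_le_one

theorem pieceLength_right_part_le_one (hA : IsPhiWord Rel A) (hAdm : Admissible Rel A)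
    (hs : A.getD (i + 1) [] = s ++ t)
    (hD : p ++ A.getD i [] ++ s ∈ defWords Rel) : pieceLength (defWords Rel) s ≤ 1 := by
  rcases eq_or_ne s [] with rfl | hs0
  · simp [pieceLength_nil]
  have hi : i + 1 < A.length := by
    by_contra! hi
    rw [List.getD_eq_default _ _ hi] at hs
    exact hs0 (List.append_eq_nil_iff.mp hs.symm).1
  rw [List.getD_eq_getElem _ _ hi] at hs
  rw [List.getD_eq_getElem _ _ (by omega)] at hD
  exact (isPiece_of_append_notMem_bset_right (hA _ (List.getElem_mem _))
    (hAdm.append_notMem_bset hi) hs hs0 hD).pieceLength_le_one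

theorem not_isPiece_of_kappaOne (hDag : Dagger Rel) (hA : IsPhiWord Rel A)
    (hAdm : Admissible Rel A) (hin : i < A.length) (hκ : KappaOne Rel A i) :
    ¬ IsPiece (defWords Rel) (A.getD i []) := by
  intro hW
  obtain ⟨p, s, q, t, hq, hs, hD, C, hC, hlt⟩ := hκ
  have hp := pieceLength_left_part_le_one hA hAdm hin hq hD
  have hs := pieceLength_right_part_le_one hA hAdm hs hD
  have h3 : pieceLength (defWords Rel) (p ++ A.getD i [] ++ s) ≤ 3 := calc
    _ ≤ pieceLength (defWords Rel) p + pieceLength (defWords Rel) (A.getD i []) +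
        pieceLength (defWords Rel) s :=
      (pieceLength_append_le _ _).trans (add_le_add_left (pieceLength_append_le _ _) _)
    _ ≤ 1 + 1 + 1 := add_le_add (add_le_add hp hW.pieceLength_le_one) hs
    _ = 3 := by norm_num
  have h4 := hDag.four_le_pieceLength hC hlt
  have : (4 : ℕ∞) ≤ 3 := h4.trans h3
  norm_num at this

end Decomposition

theorem marked_decomposition_unique_general {X : Type*} (Rel : Set (List X × List X))
    (hD : Dagger Rel)
    (A : List (List X)) (hA : IsPhiWord Rel A) (hAdm : Admissible Rel A)
    (i : ℕ) (hin : i < A.length) (hκ : KappaOne Rel A i) :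
    ∀ p s q t p' s' q' t' : List X,
      prevBlock A i = q ++ p → A.getD (i + 1) [] = s ++ t →
      (p ++ A.getD i [] ++ s) ∈ defWords Rel →
      prevBlock A i = q' ++ p' → A.getD (i + 1) [] = s' ++ t' →
      (p' ++ A.getD i [] ++ s') ∈ defWords Rel →
      p = p' ∧ s = s' := by
  intro p s q t p' s' q' t' _ _ hmem _ _ hmem'
  by_contra h
  exact not_isPiece_of_kappaOne hD hA hAdm hin hκ
    ⟨_, hmem, _, hmem', p, s, p', s', rfl, rfl, not_and_or.mp h⟩

/-- Uniqueness of the decompositions in the definition of `κ_A`: if `A` is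
admissible and `⟨κ_A⟩ᵢ = 1`, then the decompositions `W_{i-1} = q ++ p` and
`W_{i+1} = s ++ t` with `p ++ W_i ++ s` a defining word are unique. -/
theorem marked_decomposition_unique {X : Type*} (Rel : Set (List X × List X))
    (hK : K32 Rel) (hD : Dagger Rel)
    (A : List (List X)) (hA : IsPhiWord Rel A) (hAdm : Admissible Rel A)
    (i : ℕ) (hin : i < A.length) (hκ : KappaOne Rel A i) :
    ∀ p s q t p' s' q' t' : List X,
      prevBlock A i = q ++ p → A.getD (i + 1) [] = s ++ t →
      (p ++ A.getD i [] ++ s) ∈ defWords Rel →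
      prevBlock A i = q' ++ p' → A.getD (i + 1) [] = s' ++ t' →
      (p' ++ A.getD i [] ++ s') ∈ defWords Rel →
      p = p' ∧ s = s' :=
  marked_decomposition_unique_general Rel hD A hA hAdm i hin hκ
end

section
/- For every A ∈ Φ* there is a unique A′ ∈ Φ* that is left-greedy and satisfies η(A) = η(A′); moreover A′ is semi-geodesic, i.e., |A′| ≤ |B| for every B ∈ Φ* with η(B) = η(A). -/
/-! In a dictionary `S` closed under nonempty factors, a factorization is left-greedy exactly
when each block is the longest prefix of the remaining word that lies in `S`, so the left-greedy
factorization of a word exists and is unique. It is also shortest: by induction on an arbitrary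
factorization `b :: B`, the greedy factorization of any suffix of the word is no longer, since a
suffix starting inside `b` begins with a nonempty factor of `b`, which lies in `S` and is
therefore covered by the first greedy block. -/

namespace List

variable {α : Type*}

theorem exists_longest_prefix_mem {S : Set (List α)} {w : List α} (h : ∃ q ∈ S, q <+: w) :
    ∃ p ∈ S, p <+: w ∧ ∀ q ∈ S, q <+: w → q.length ≤ p.length := by
  classical
  have take_length {q : List α} (hq : q <+: w) : w.take q.length = q :=
    (prefix_iff_eq_take.mp hq).symm
  obtain ⟨q₀, hq₀S, hq₀w⟩ := h
  set k := Nat.findGreatest (fun k => w.take k ∈ S) w.length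
  refine ⟨w.take k, ?_, take_prefix k w, fun q hqS hqw => ?_⟩
  · exact Nat.findGreatest_spec (P := fun k => w.take k ∈ S) hq₀w.length_le
      (show w.take q₀.length ∈ S by rwa [take_length hq₀w])
  · rw [length_take_of_le (Nat.findGreatest_le _)]
    exact Nat.le_findGreatest hqw.length_le (show w.take q.length ∈ S by rwa [take_length hqw])

end List

section LeftGreedyFactorization

variable {α : Type*} {S : Set (List α)}

def IsFactorClosed (S : Set (List α)) : Prop :=
  ∀ ⦃u v : List α⦄, u <:+: v → u ≠ [] → v ∈ S → u ∈ S

def LeftGreedyWrt (S : Set (List α)) (A : List (List α)) : Prop :=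
  A.IsChain fun u v => ∀ x ∈ v.head?, u ++ [x] ∉ S

theorem eq_nil_of_flatten_eq_nil (hnil : [] ∉ S) {A : List (List α)} (hA : ∀ W ∈ A, W ∈ S)
    (h : A.flatten = []) : A = [] :=
  List.eq_nil_iff_forall_not_mem.mpr fun W hW =>
    hnil (List.flatten_eq_nil_iff.mp h W hW ▸ hA W hW)

theorem IsFactorClosed.singleton_mem_of_mem_flatten (hS : IsFactorClosed S)
    {A : List (List α)} (hA : ∀ W ∈ A, W ∈ S) {x : α} (hx : x ∈ A.flatten) : [x] ∈ S := by
  obtain ⟨W, hWA, hxW⟩ := List.mem_flatten.mp hx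
  exact hS ((List.singleton_infix_iff x W).mpr hxW) (List.cons_ne_nil x []) (hA W hWA)

theorem exists_leftGreedyWrt_flatten_eq (hnil : [] ∉ S) {w : List α}
    (hw : ∀ x ∈ w, [x] ∈ S) :
    ∃ A : List (List α), (∀ W ∈ A, W ∈ S) ∧ LeftGreedyWrt S A ∧ A.flatten = w := by
  induction h : w.length using Nat.strong_induction_on generalizing w with
  | _ n ih =>
  rcases eq_or_ne w [] with rfl | hne
  · exact ⟨[], by simp, List.isChain_nil, rfl⟩
  obtain ⟨x, w', rfl⟩ := List.exists_cons_of_ne_nil hne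
  obtain ⟨p, hpS, ⟨r, hpr⟩, hp⟩ :=
    List.exists_longest_prefix_mem (w := x :: w') ⟨[x], hw x List.mem_cons_self, by simp⟩
  have hpne : p ≠ [] := fun h => hnil (h ▸ hpS)
  have hr : r.length < n := by
    rw [← h, ← hpr, List.length_append]
    exact Nat.lt_add_of_pos_left (List.length_pos_iff.mpr hpne)
  obtain ⟨R, hRS, hRG, rfl⟩ := ih r.length hr (fun y hy => hw y (hpr ▸ List.mem_append_right p hy)) rfl
  refine ⟨p :: R, List.forall_mem_cons.mpr ⟨hpS, hRS⟩, List.isChain_cons.mpr ⟨?_, hRG⟩, hpr⟩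
  intro d hd y hy hpy
  obtain ⟨R', rfl⟩ := List.head?_eq_some_iff.mp hd
  obtain ⟨d', rfl⟩ := List.head?_eq_some_iff.mp hy
  simpa using hp _ hpy ⟨d' ++ R'.flatten, by rw [← hpr]; simp⟩

namespace LeftGreedyWrt

theorem prefix_length_le (hnil : [] ∉ S) (hS : IsFactorClosed S)
    {c : List α} {C : List (List α)} (hC : ∀ W ∈ c :: C, W ∈ S)
    (hG : LeftGreedyWrt S (c :: C)) {q : List α} (hqS : q ∈ S)
    (hqw : q <+: (c :: C).flatten) : q.length ≤ c.length := by
  by_contra! hlt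
  obtain _ | ⟨d, D⟩ := C
  · exact absurd hqw.length_le (by simpa using hlt)
  obtain ⟨x, d', rfl⟩ := List.exists_cons_of_ne_nil fun h => hnil (h ▸ hC d (by simp))
  have hcx : c ++ [x] <+: q :=
    List.prefix_of_prefix_length_le ⟨d' ++ D.flatten, by simp⟩ hqw (by simpa using hlt)
  exact (List.isChain_cons_cons.mp hG).1 x rfl (hS hcx.isInfix (by simp) hqS)

theorem eq_of_flatten_eq (hnil : [] ∉ S) (hS : IsFactorClosed S)
    {A B : List (List α)} (hA : ∀ W ∈ A, W ∈ S) (hB : ∀ W ∈ B, W ∈ S)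
    (hAG : LeftGreedyWrt S A) (hBG : LeftGreedyWrt S B) (h : A.flatten = B.flatten) :
    A = B := by
  induction A generalizing B with
  | nil => exact (eq_nil_of_flatten_eq_nil hnil hB h.symm).symm
  | cons a A ih =>
    obtain _ | ⟨b, B⟩ := B
    · exact eq_nil_of_flatten_eq_nil hnil hA h
    rw [List.flatten_cons, List.flatten_cons] at h
    have hab : a.length = b.length := le_antisymm
      (hBG.prefix_length_le hnil hS hB (hA a List.mem_cons_self) ⟨A.flatten, h⟩)
      (hAG.prefix_length_le hnil hS hA (hB b List.mem_cons_self) ⟨B.flatten, h.symm⟩)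
    obtain rfl := List.append_inj_left h hab
    rw [ih (fun W hW => hA W (List.mem_cons_of_mem a hW))
      (fun W hW => hB W (List.mem_cons_of_mem a hW)) hAG.tail hBG.tail (List.append_cancel_left h)]

theorem length_le_of_flatten_suffix (hnil : [] ∉ S) (hS : IsFactorClosed S)
    {C B : List (List α)} (hC : ∀ W ∈ C, W ∈ S) (hB : ∀ W ∈ B, W ∈ S)
    (hG : LeftGreedyWrt S C) (h : C.flatten <:+ B.flatten) : C.length ≤ B.length := by
  induction B generalizing C with
  | nil => simp [eq_nil_of_flatten_eq_nil hnil hC (List.suffix_nil.mp h)]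
  | cons b B ih =>
    have hB' : ∀ W ∈ B, W ∈ S := fun W hW => hB W (List.mem_cons_of_mem b hW)
    obtain ⟨t, ht⟩ := h
    rw [List.flatten_cons, List.append_eq_append_iff] at ht
    rcases ht with ⟨b', rfl, hCb'⟩ | ⟨t', rfl, hBt'⟩
    · obtain _ | ⟨c, C⟩ := C
      · simp
      rcases eq_or_ne b' [] with rfl | hb'
      · exact (ih hC hB' hG (by simp [hCb'])).trans (Nat.le_succ _)
      have hb'c : b'.length ≤ c.length :=
        hG.prefix_length_le hnil hS hC
          (hS (List.suffix_append t b').isInfix hb' (hB _ List.mem_cons_self))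
          ⟨B.flatten, hCb'.symm⟩
      rw [List.flatten_cons] at hCb'
      have hsuffix := List.drop_suffix_drop_left (c ++ C.flatten) hb'c
      rw [List.drop_left, hCb', List.drop_left] at hsuffix
      simpa using ih (fun W hW => hC W (List.mem_cons_of_mem c hW)) hB' hG.tail hsuffix
    · exact (ih hC hB' hG ⟨t', hBt'.symm⟩).trans (Nat.le_succ _)

end LeftGreedyWrt

end LeftGreedyFactorization

theorem nil_not_mem_Bset {X : Type*} (Rel : Set (List X × List X)) : [] ∉ Bset Rel :=
  fun h => h.1 rfl

theorem isFactorClosed_Bset {X : Type*} (Rel : Set (List X × List X)) :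
    IsFactorClosed (Bset Rel) :=
  fun _ _ huv hu ⟨_, D, hD, hvD⟩ => ⟨hu, D, hD, huv.trans hvD⟩

theorem leftGreedy_exists_unique_semiGeodesic_general {X : Type*}
    (Rel : Set (List X × List X))
    (A : List (List X)) (hA : IsPhiWord Rel A) :
    ∃ A' : List (List X), IsPhiWord Rel A' ∧ LeftGreedy Rel A' ∧
      A'.flatten = A.flatten ∧
      (∀ B : List (List X), IsPhiWord Rel B → LeftGreedy Rel B →
        B.flatten = A.flatten → B = A') ∧
      (∀ B : List (List X), IsPhiWord Rel B → B.flatten = A.flatten →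
        A'.length ≤ B.length) := by
  have hnil := nil_not_mem_Bset Rel
  have hS := isFactorClosed_Bset Rel
  obtain ⟨A', hA'B, hA'G, hA'A⟩ :=
    exists_leftGreedyWrt_flatten_eq hnil fun _ => hS.singleton_mem_of_mem_flatten hA
  refine ⟨A', hA'B, hA'G, hA'A, fun B hB hBG hBA => ?_, fun B hB hBA => ?_⟩
  · exact LeftGreedyWrt.eq_of_flatten_eq hnil hS hB hA'B hBG hA'G (hBA.trans hA'A.symm)
  · exact LeftGreedyWrt.length_le_of_flatten_suffix hnil hS hA'B hB hA'G (by rw [hA'A, hBA])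

/-- For every `A ∈ Φ*` there is a unique left-greedy `A' ∈ Φ*` with `η(A) = η(A')`;
moreover `A'` is semi-geodesic: `|A'| ≤ |B|` for every `B ∈ Φ*` with `η(B) = η(A)`. -/
theorem leftGreedy_exists_unique_semiGeodesic {X : Type*}
    (Rel : Set (List X × List X)) (hK : K32 Rel) (hD : Dagger Rel)
    (A : List (List X)) (hA : IsPhiWord Rel A) :
    ∃ A' : List (List X), IsPhiWord Rel A' ∧ LeftGreedy Rel A' ∧
      A'.flatten = A.flatten ∧
      (∀ B : List (List X), IsPhiWord Rel B → LeftGreedy Rel B →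
        B.flatten = A.flatten → B = A') ∧
      (∀ B : List (List X), IsPhiWord Rel B → B.flatten = A.flatten →
        A'.length ≤ B.length) :=
  leftGreedy_exists_unique_semiGeodesic_general Rel A hA
end

section
/- Let P satisfy K32 and (†) and let A, B ∈ Φ* be admissible with η(A) = η(B). Then A is efficient if and only if B is efficient. -/
section Aux

variable {X : Type*} {Rel : Set (List X × List X)}

private lemma lp_le (R : Set (List X)) (l : List (List X)) (h : ∀ P ∈ l, IsPiece R P) :
    pieceLength R l.flatten ≤ (l.length : ℕ∞) :=
  sInf_le ⟨l, h, rfl, rfl⟩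

private lemma defWord_lp (hK : K32 Rel) {W : List X} (hW : W ∈ defWords Rel) :
    3 ≤ pieceLength (defWords Rel) W := hK.2.1 W hW

private lemma defWord_ne_nil (hK : K32 Rel) {W : List X} (hW : W ∈ defWords Rel) :
    W ≠ [] := by
  intro h
  have h3 := defWord_lp hK hW
  have h0 : pieceLength (defWords Rel) W ≤ (([] : List (List X)).length : ℕ∞) :=
    h ▸ lp_le _ [] (by simp)
  simp at h0
  rw [h0] at h3
  norm_num at h3

private lemma getD_append_len (l₁ : List (List X)) (x : List X) (l₂ : List (List X)) :
    (l₁ ++ x :: l₂).getD l₁.length [] = x := by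
  induction l₁ with
  | nil => rfl
  | cons a t ih => simpa using ih

private lemma getD_append_add (l₁ l₂ : List (List X)) (n : ℕ) :
    (l₁ ++ l₂).getD (l₁.length + n) [] = l₂.getD n [] := by
  induction l₁ with
  | nil => simp
  | cons a t ih => simpa [Nat.succ_add] using ih

private lemma chain'_middle {α : Type*} {R : α → α → Prop} {l₁ l₂ : List α} {a b : α}
    (h : List.Chain' R (l₁ ++ a :: b :: l₂)) : R a b := by
  induction l₁ with
  | nil => exact (List.isChain_cons_cons.mp h).1
  | cons c t ih => exact ih h.tail

private lemma ne_nil_of_flatten_eq {l : List (List X)} {U W V : List X} (hW : W ≠ [])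
    (h : l.flatten = U ++ W ++ V) (hl : l = []) : False := by
  subst hl
  have := congrArg List.length h
  simp at this
  exact hW (List.eq_nil_of_length_eq_zero (by omega))

private lemma flatten_prefix_span (l : List (List X)) (W V : List X) (hW : W ≠ [])
    (h : l.flatten = W ++ V) :
    ∃ mid c l₂ s t, l = mid ++ c :: l₂ ∧ c = s ++ t ∧ s ≠ [] ∧
      W = mid.flatten ++ s ∧ V = t ++ l₂.flatten := by
  induction l generalizing W V with
  | nil =>
    simp only [List.flatten_nil] at h
    exact (hW (List.eq_nil_of_length_eq_zero
      (by have := congrArg List.length h; simp at this; omega))).elim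
  | cons c rest ih =>
    simp only [List.flatten_cons] at h
    have hpc : c <+: c ++ rest.flatten := List.prefix_append _ _
    have hpW : W <+: c ++ rest.flatten := ⟨V, h.symm⟩
    by_cases hle : W.length ≤ c.length
    · obtain ⟨t₀, rfl⟩ := List.prefix_of_prefix_length_le hpW hpc hle
      have hV : V = t₀ ++ rest.flatten := by
        rw [List.append_assoc] at h
        exact (List.append_cancel_left h).symm
      exact ⟨[], W ++ t₀, rest, W, t₀, by simp, rfl, hW, by simp, hV⟩
    · obtain ⟨W', rfl⟩ := List.prefix_of_prefix_length_le hpc hpW (by omega)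
      have hW' : W' ≠ [] := by rintro rfl; simp at hle
      have h' : rest.flatten = W' ++ V := by
        rw [List.append_assoc] at h
        exact List.append_cancel_left h
      obtain ⟨mid, c', l₂, s, t, h1, h2, h3, h4, h5⟩ := ih W' V hW' h'
      exact ⟨c :: mid, c', l₂, s, t, by simp [h1], h2, h3, by simp [h4], h5⟩

private lemma flatten_infix_span (l : List (List X)) (U W V : List X) (hW : W ≠ [])
    (h : l.flatten = U ++ W ++ V) :
    (∃ l₁ b l₂ G H, l = l₁ ++ b :: l₂ ∧ b = G ++ W ++ H) ∨
    (∃ l₁ b mid c l₂ q p s t, l = l₁ ++ b :: (mid ++ c :: l₂) ∧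
      b = q ++ p ∧ c = s ++ t ∧ p ≠ [] ∧ s ≠ [] ∧ W = p ++ mid.flatten ++ s) := by
  induction l generalizing U with
  | nil => exact absurd (ne_nil_of_flatten_eq hW h rfl) not_false
  | cons b rest ih =>
    simp only [List.flatten_cons] at h
    have hpb : b <+: b ++ rest.flatten := List.prefix_append _ _
    have hpU : U <+: b ++ rest.flatten := ⟨W ++ V, by rw [h, List.append_assoc]⟩
    by_cases h1 : b.length ≤ U.length
    · obtain ⟨U', rfl⟩ := List.prefix_of_prefix_length_le hpb hpU h1
      have h' : rest.flatten = U' ++ W ++ V := by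
        simp only [List.append_assoc] at h
        simpa [List.append_assoc] using List.append_cancel_left h
      rcases ih U' h' with ⟨l₁, b', l₂, G, H, e1, e2⟩ |
        ⟨l₁, b', mid, c, l₂, q, p, s, t, e1, e2, e3, e4, e5, e6⟩
      · exact Or.inl ⟨b :: l₁, b', l₂, G, H, by simp [e1], e2⟩
      · exact Or.inr ⟨b :: l₁, b', mid, c, l₂, q, p, s, t, by simp [e1], e2, e3, e4, e5, e6⟩
    · obtain ⟨b', rfl⟩ := List.prefix_of_prefix_length_le hpU hpb (by omega)
      have hb' : b' ≠ [] := by rintro rfl; simp at h1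
      have h' : b' ++ rest.flatten = W ++ V := by
        simp only [List.append_assoc] at h
        simpa [List.append_assoc] using List.append_cancel_left h
      have hpW : W <+: b' ++ rest.flatten := ⟨V, h'.symm⟩
      have hpb' : b' <+: b' ++ rest.flatten := List.prefix_append _ _
      by_cases h2 : W.length ≤ b'.length
      · obtain ⟨H, rfl⟩ := List.prefix_of_prefix_length_le hpW hpb' h2
        exact Or.inl ⟨[], U ++ (W ++ H), rest, U, H, by simp, by simp⟩
      · obtain ⟨W', rfl⟩ := List.prefix_of_prefix_length_le hpb' hpW (by omega)
        have hW' : W' ≠ [] := by rintro rfl; simp at h2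
        have h'' : rest.flatten = W' ++ V := by
          rw [List.append_assoc] at h'
          exact List.append_cancel_left h'
        obtain ⟨mid, c, l₂, s, t, e1, e2, e3, e4, e5⟩ := flatten_prefix_span rest W' V hW' h''
        exact Or.inr ⟨[], U ++ b', mid, c, l₂, U, b', s, t, by simp [e1], rfl, e2, hb', e3,
          by simp [e4]⟩

end Aux

section Aux2

variable {X : Type*} {Rel : Set (List X × List X)}

/-- A word that witnesses inefficiency: a factor that is a defining word whose
piece-length exceeds that of its complement. -/
private def BadWord (Rel : Set (List X × List X)) (w : List X) : Prop :=
  ∃ U W V C : List X, w = U ++ W ++ V ∧ W ∈ defWords Rel ∧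
    ((W, C) ∈ Rel ∨ (C, W) ∈ Rel) ∧
    pieceLength (defWords Rel) C < pieceLength (defWords Rel) W

private lemma piece_absurd (hK : K32 Rel) {W : List X} (hW : W ∈ defWords Rel)
    (hp : IsPiece (defWords Rel) W) : False := by
  have h1 : pieceLength (defWords Rel) W ≤ ((1 : ℕ) : ℕ∞) := by
    have := lp_le (defWords Rel) [W] (by simpa using hp)
    simpa using this
  have h3 := defWord_lp hK hW
  have : (3 : ℕ∞) ≤ 1 := le_trans h3 h1
  norm_num at this

private lemma two_piece_absurd (hK : K32 Rel) {p s : List X} (hps : p ++ s ∈ defWords Rel)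
    (hp : IsPiece (defWords Rel) p) (hs : IsPiece (defWords Rel) s) : False := by
  have h1 : pieceLength (defWords Rel) (p ++ s) ≤ ((2 : ℕ) : ℕ∞) := by
    have := lp_le (defWords Rel) [p, s] (by simp [hp, hs])
    simpa using this
  have h3 := defWord_lp hK hps
  have : (3 : ℕ∞) ≤ 2 := le_trans h3 h1
  norm_num at this

/-- If a defining word `W` is a factor of a block `b ∈ 𝓑`, then `b = W`. -/
private lemma block_eq_defWord (hK : K32 Rel) {b G W H : List X} (hb : b ∈ Bset Rel)
    (hW : W ∈ defWords Rel) (he : b = G ++ W ++ H) : b = W := by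
  obtain ⟨-, D, hD, E, F, hEF⟩ := hb
  by_cases hGH : G = [] ∧ H = []
  · rw [he, hGH.1, hGH.2]; simp
  · exfalso
    refine piece_absurd hK hW ⟨W, hW, D, hD, [], [], E ++ G, H ++ F, by simp, ?_, ?_⟩
    · rw [← hEF, he]; simp [List.append_assoc]
    · rcases (not_and_or.mp hGH) with hG | hH
      · exact Or.inl fun h => hG (List.append_eq_nil_iff.mp h.symm).2
      · exact Or.inr fun h => hH (List.append_eq_nil_iff.mp h.symm).1

private lemma bad_of_kappa (A : List (List X)) (i : ℕ) (hi : i < A.length)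
    (hk : KappaOne Rel A i) : BadWord Rel A.flatten := by
  obtain ⟨p, s, q, t, hprev, hnext, hdef, C, hC, hlt⟩ := hk
  have hgd : A.getD i [] = A[i] := List.getD_eq_getElem A [] hi
  have hpre : ∃ U0, (A.take i).flatten = U0 ++ p := by
    rcases i with _ | j
    · have hp : p = [] := (List.append_eq_nil_iff.mp (by simpa [prevBlock] using hprev.symm)).2
      exact ⟨[], by simp [hp]⟩
    · have hj : j < A.length := by omega
      have : A.getD j [] = q ++ p := by simpa [prevBlock] using hprev
      refine ⟨(A.take j).flatten ++ q, ?_⟩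
      rw [List.take_succ, List.getElem?_eq_getElem hj]
      simp [List.getD_eq_getElem A [] hj ▸ this, List.append_assoc]
  have hpost : ∃ V0, (A.drop (i + 1)).flatten = s ++ V0 := by
    by_cases h : i + 1 < A.length
    · have : A.getD (i + 1) [] = A[i + 1] := List.getD_eq_getElem A [] h
      refine ⟨t ++ (A.drop (i + 2)).flatten, ?_⟩
      rw [List.drop_eq_getElem_cons h, List.flatten_cons, ← this, hnext, List.append_assoc]
    · have hs : s = [] := by
        have h0 : A.getD (i + 1) [] = [] := List.getD_eq_default A [] (by omega)
        exact (List.append_eq_nil_iff.mp (h0 ▸ hnext.symm)).1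
      exact ⟨(A.drop (i + 1)).flatten, by simp [hs]⟩
  obtain ⟨U0, hU0⟩ := hpre
  obtain ⟨V0, hV0⟩ := hpost
  refine ⟨U0, p ++ A.getD i [] ++ s, V0, C, ?_, hdef, hC, hlt⟩
  rw [hgd]
  conv_lhs => rw [← List.take_append_drop i A, List.drop_eq_getElem_cons hi]
  rw [List.flatten_append, List.flatten_cons, hU0, hV0]
  simp [List.append_assoc]

private lemma kappa_of_bad (hK : K32 Rel) {A : List (List X)} (hA : IsPhiWord Rel A)
    (hAdm : Admissible Rel A) (hb : BadWord Rel A.flatten) :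
    ∃ i < A.length, KappaOne Rel A i := by
  obtain ⟨U, W, V, C, heq, hdefW, hC, hlt⟩ := hb
  have hWne : W ≠ [] := defWord_ne_nil hK hdefW
  rcases flatten_infix_span A U W V hWne heq with ⟨l₁, b, l₂, G, H, e1, e2⟩ |
    ⟨l₁, b, mid, c, l₂, q, p, s, t, e1, e2, e3, e4, e5, e6⟩
  · -- W inside a single block: that block equals W
    subst e1
    have hbW : b = W := block_eq_defWord hK (hA b (by simp)) hdefW e2
    have hgd : (l₁ ++ b :: l₂).getD l₁.length [] = b := getD_append_len l₁ b l₂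
    refine ⟨l₁.length, by simp, [], [], prevBlock (l₁ ++ b :: l₂) l₁.length,
      (l₁ ++ b :: l₂).getD (l₁.length + 1) [], by simp, by simp, ?_, C, ?_, ?_⟩ <;>
      rw [List.nil_append, List.append_nil, hgd, hbW]
    exacts [hdefW, hC, hlt]
  · subst e1
    rcases mid with _ | ⟨m₁, mtail⟩
    · -- no middle block
      simp only [List.nil_append] at hA hAdm heq ⊢
      simp only [List.flatten_nil, List.append_nil] at e6
      have hgd0 : (l₁ ++ b :: c :: l₂).getD l₁.length [] = b := getD_append_len _ _ _
      have hgd1 : (l₁ ++ b :: c :: l₂).getD (l₁.length + 1) [] = c := by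
        rw [getD_append_add]; rfl
      have hpb : prevBlock (l₁ ++ b :: c :: l₂) (l₁.length + 1)
          = (l₁ ++ b :: c :: l₂).getD l₁.length [] := rfl
      by_cases hq : q = []
      · -- p is the whole block b
        have hbp : b = p := by rw [e2, hq]; simp
        refine ⟨l₁.length, by simp, [], s, prevBlock (l₁ ++ b :: c :: l₂) l₁.length, t,
          by simp, by rw [hgd1, e3], ?_, C, ?_, ?_⟩ <;>
          rw [List.nil_append, hgd0, hbp, ← e6]
        exacts [hdefW, hC, hlt]
      · by_cases ht : t = []
        · -- s is the whole block c
          have hcs : c = s := by rw [e3, ht]; simp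
          refine ⟨l₁.length + 1, by simp, p, [], q,
            (l₁ ++ b :: c :: l₂).getD (l₁.length + 2) [], by rw [hpb, hgd0, e2],
            by simp, ?_, C, ?_, ?_⟩ <;>
            rw [List.append_nil, hgd1, hcs, ← e6]
          exacts [hdefW, hC, hlt]
        · -- both q and t nonempty: p and s are pieces, contradiction
          exfalso
          obtain ⟨-, D, hD, E, F, hEF⟩ := hA b (by simp)
          obtain ⟨-, D', hD', E', F', hEF'⟩ := hA c (by simp)
          refine two_piece_absurd hK (e6 ▸ hdefW) ?_ ?_
          · refine ⟨W, hdefW, D, hD, [], s, E ++ q, F, by simp [e6], ?_,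
              Or.inl fun h => hq (List.append_eq_nil_iff.mp h.symm).2⟩
            rw [← hEF, e2]; simp [List.append_assoc]
          · refine ⟨W, hdefW, D', hD', p, [], E', t ++ F', by simp [e6], ?_,
              Or.inr fun h => ht (List.append_eq_nil_iff.mp h.symm).1⟩
            rw [← hEF', e3]; simp [List.append_assoc]
    · rcases mtail with _ | ⟨m₂, rest⟩
      · -- one middle block
        simp only [List.cons_append, List.nil_append] at hA hAdm heq ⊢
        simp only [List.flatten_cons, List.flatten_nil, List.append_nil] at e6
        have hgd0 : (l₁ ++ b :: m₁ :: c :: l₂).getD l₁.length [] = b := getD_append_len _ _ _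
        have hgd1 : (l₁ ++ b :: m₁ :: c :: l₂).getD (l₁.length + 1) [] = m₁ := by
          rw [getD_append_add]; rfl
        have hgd2 : (l₁ ++ b :: m₁ :: c :: l₂).getD (l₁.length + 2) [] = c := by
          rw [getD_append_add]; rfl
        have hpb : prevBlock (l₁ ++ b :: m₁ :: c :: l₂) (l₁.length + 1)
            = (l₁ ++ b :: m₁ :: c :: l₂).getD l₁.length [] := rfl
        refine ⟨l₁.length + 1, by simp, p, s, q, t, by rw [hpb, hgd0, e2],
          by rw [hgd2, e3], ?_, C, ?_, ?_⟩ <;> rw [hgd1, ← e6]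
        exacts [hdefW, hC, hlt]
      · -- at least two middle blocks: contradicts admissibility
        exfalso
        have hchain : List.Chain' (fun u v => (u ++ v) ∉ Bset Rel)
            ((l₁ ++ [b]) ++ m₁ :: m₂ :: (rest ++ c :: l₂)) := by
          have e : (l₁ ++ [b]) ++ m₁ :: m₂ :: (rest ++ c :: l₂)
              = l₁ ++ b :: ((m₁ :: m₂ :: rest) ++ c :: l₂) := by simp
          rw [e]; exact hAdm
        have hnot := chain'_middle hchain
        refine hnot ⟨?_, W, hdefW, p, rest.flatten ++ s, ?_⟩
        · have hm₁ : m₁ ≠ [] := (hA m₁ (by simp)).1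
          intro h; exact hm₁ (List.append_eq_nil_iff.mp h).1
        · rw [e6]; simp [List.append_assoc]

end Aux2

/-- Efficiency depends only on `η(A)`: if `A, B ∈ Φ*` are admissible with
`η(A) = η(B)`, then `A` is efficient iff `B` is efficient. -/
theorem efficient_iff_of_eta_eq {X : Type*} (Rel : Set (List X × List X))
    (hK : K32 Rel) (hD : Dagger Rel)
    (A B : List (List X)) (hA : IsPhiWord Rel A) (hB : IsPhiWord Rel B)
    (hAdmA : Admissible Rel A) (hAdmB : Admissible Rel B)
    (heta : A.flatten = B.flatten) :
    Efficient Rel A ↔ Efficient Rel B := by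
  constructor
  · rintro ⟨-, h⟩
    refine ⟨hAdmB, fun i hi hk => ?_⟩
    have hb : BadWord Rel A.flatten := heta ▸ bad_of_kappa B i hi hk
    obtain ⟨j, hj, hkj⟩ := kappa_of_bad hK hA hAdmA hb
    exact h j hj hkj
  · rintro ⟨-, h⟩
    refine ⟨hAdmA, fun i hi hk => ?_⟩
    have hb : BadWord Rel B.flatten := heta ▸ bad_of_kappa A i hi hk
    obtain ⟨j, hj, hkj⟩ := kappa_of_bad hK hB hAdmB hb
    exact h j hj hkj
end
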